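/- arXiv:1809.00001 — 2 statements merged into one kernel-verified Lean document; each statement's English description precedes it below -/
import Mathlib

section
/- For every integer n ≥ 2 and every assignment of real numbers y_1, …, y_n, the polynomial identity L_n(y_1, …, y_n) = R_n(y_1, …, y_n) holds, where L_n(y) := ∑_{T ∈ T_n} ∏_{i=1}^n [y_i(y_i+1)⋯(y_i+d_T(i)−2)] (the product over i using the ascending factorial with d_T(i)−1 factors, equal to 1 when d_T(i) = 1) and R_n(y) := ∏_{j=0}^{n−3}((∑_{i=1}^n y_i) + j) (the ascending factorial of ∑ y_i with n−2 factors, equal to 1 when n = 2). -/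
open scoped Classical

/-- The degree of vertex `i` in the simple graph `G`. -/
noncomputable def treeDeg {n : ℕ} (G : SimpleGraph (Fin n)) (i : Fin n) : ℕ :=
  Nat.card (G.neighborSet i)

/-- The finite set of vertex-labeled trees on `{0, …, n-1}`: simple graphs on `Fin n`
that are connected and acyclic. -/
noncomputable def treeFinset (n : ℕ) : Finset (SimpleGraph (Fin n)) :=
  Finset.univ.filter (fun G => G.IsTree)

/-- The ascending factorial `x (x+1) ⋯ (x+m-1)` with `m` factors (equal to `1` when `m = 0`). -/
noncomputable def ascFac (x : ℝ) (m : ℕ) : ℝ :=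
  ∏ j ∈ Finset.range m, (x + j)

/-- `L_n(y) := ∑_{T ∈ T_n} ∏_i y_i (y_i+1) ⋯ (y_i + d_T(i) - 2)`, each factor being the
ascending factorial with `d_T(i) - 1` factors. -/
noncomputable def Lpoly (n : ℕ) (y : Fin n → ℝ) : ℝ :=
  ∑ T ∈ treeFinset n, ∏ i, ascFac (y i) (treeDeg T i - 1)

/-- `R_n(y) := ∏_{j=0}^{n-3} ((∑ i, y i) + j)`, the ascending factorial of `∑ y` with
`n - 2` factors. -/
noncomputable def Rpoly (n : ℕ) (y : Fin n → ℝ) : ℝ :=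
  ∏ j ∈ Finset.range (n - 2), ((∑ i, y i) + j)

open Finset SimpleGraph
set_option linter.unusedSectionVars false

variable {V : Type} [Fintype V] [DecidableEq V]

noncomputable def dg (G : SimpleGraph V) (i : V) : ℕ :=
  #(univ.filter fun b => G.Adj i b)

lemma dg_unique {G : SimpleGraph V} {i a b : V} (h : dg G i = 1)
    (ha : G.Adj i a) (hb : G.Adj i b) : a = b := by
  have := Finset.card_le_one.1 (le_of_eq h)
  exact this a (by simp [ha]) b (by simp [hb])

section Leaf
variable (i0 : V)

noncomputable def restrictG (G : SimpleGraph V) : SimpleGraph {x : V // x ≠ i0} :=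
  G.comap (Function.Embedding.subtype _)

def extendG (j : {x : V // x ≠ i0}) (H : SimpleGraph {x : V // x ≠ i0}) : SimpleGraph V where
  Adj a b := (∃ (ha : a ≠ i0) (hb : b ≠ i0), H.Adj ⟨a, ha⟩ ⟨b, hb⟩) ∨
    (a = i0 ∧ b = j.val) ∨ (b = i0 ∧ a = j.val)
  symm := by
    constructor
    rintro a b (⟨ha, hb, h⟩ | ⟨h1, h2⟩ | ⟨h1, h2⟩)
    · exact Or.inl ⟨hb, ha, h.symm⟩
    · exact Or.inr (Or.inr ⟨h1, h2⟩)
    · exact Or.inr (Or.inl ⟨h1, h2⟩)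
  loopless := by
    constructor
    rintro a (⟨ha, hb, h⟩ | ⟨h1, h2⟩ | ⟨h1, h2⟩)
    · exact H.loopless.irrefl _ h
    · exact j.prop (h2.symm.trans h1)
    · exact j.prop (h1.symm.trans h2).symm

variable {i0}

lemma extend_adj_val_val (j : {x : V // x ≠ i0}) (H) (a b : {x : V // x ≠ i0}) :
    (extendG i0 j H).Adj a.val b.val ↔ H.Adj a b := by
  constructor
  · rintro (⟨ha, hb, h⟩ | ⟨h1, -⟩ | ⟨h1, -⟩)
    · simpa using h
    · exact absurd h1 a.prop
    · exact absurd h1 b.prop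
  · intro h
    exact Or.inl ⟨a.prop, b.prop, by simpa using h⟩

lemma extend_adj_i0 (j : {x : V // x ≠ i0}) (H) (b : V) :
    (extendG i0 j H).Adj i0 b ↔ b = j.val := by
  constructor
  · rintro (⟨ha, -, -⟩ | ⟨-, h2⟩ | ⟨-, h2⟩)
    · exact absurd rfl ha
    · exact h2
    · exact absurd h2.symm j.prop
  · rintro rfl
    exact Or.inr (Or.inl ⟨rfl, rfl⟩)

lemma extend_adj_val_i0 (j : {x : V // x ≠ i0}) (H) (a : {x : V // x ≠ i0}) :
    (extendG i0 j H).Adj a.val i0 ↔ a = j := by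
  rw [SimpleGraph.adj_comm, extend_adj_i0, Subtype.ext_iff]

lemma restrict_extend (j : {x : V // x ≠ i0}) (H) : restrictG i0 (extendG i0 j H) = H := by
  ext a b
  exact extend_adj_val_val j H a b

lemma extend_restrict {T : SimpleGraph V} (hdeg : dg T i0 = 1) {j : {x : V // x ≠ i0}}
    (hj : T.Adj i0 j.val) : extendG i0 j (restrictG i0 T) = T := by
  ext a b
  constructor
  · rintro (⟨ha, hb, h⟩ | ⟨h1, h2⟩ | ⟨h1, h2⟩)
    · exact h
    · subst h1; subst h2; exact hj
    · subst h1; subst h2; exact hj.symm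
  · intro h
    by_cases ha : a = i0
    · subst ha
      exact Or.inr (Or.inl ⟨rfl, dg_unique hdeg h hj⟩)
    · by_cases hb : b = i0
      · subst hb
        exact Or.inr (Or.inr ⟨rfl, dg_unique hdeg h.symm hj⟩)
      · exact Or.inl ⟨ha, hb, h⟩

/-- sum splitting off i0 -/
lemma sum_split {M : Type} [AddCommMonoid M] (i0 : V) (f : V → M) :
    ∑ x, f x = f i0 + ∑ x : {x : V // x ≠ i0}, f x.val := by
  classical
  rw [← Finset.add_sum_erase _ f (Finset.mem_univ i0)]
  congr 1
  rw [Finset.sum_subtype (p := fun x => x ≠ i0) (univ.erase i0) (by simp) f]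

lemma prod_split {M : Type} [CommMonoid M] (i0 : V) (f : V → M) :
    ∏ x, f x = f i0 * ∏ x : {x : V // x ≠ i0}, f x.val := by
  classical
  rw [← Finset.mul_prod_erase _ f (Finset.mem_univ i0)]
  congr 1
  rw [Finset.prod_subtype (p := fun x => x ≠ i0) (univ.erase i0) (by simp) f]

lemma card_filter_split (i0 : V) (P : V → Prop) :
    #(univ.filter P) = (if P i0 then 1 else 0) + #(univ.filter fun x : {x : V // x ≠ i0} => P x.val) := by
  rw [Finset.card_filter, Finset.card_filter, sum_split i0]

lemma dg_extend_i0 (j : {x : V // x ≠ i0}) (H) : dg (extendG i0 j H) i0 = 1 := by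
  rw [dg]
  rw [show (univ.filter fun b => (extendG i0 j H).Adj i0 b) = {j.val} by
    ext b; simp [extend_adj_i0]]
  simp

lemma dg_extend_val (j : {x : V // x ≠ i0}) (H) (a : {x : V // x ≠ i0}) :
    dg (extendG i0 j H) a.val = dg H a + (if a = j then 1 else 0) := by
  rw [dg, card_filter_split i0]
  rw [add_comm]
  congr 1
  · rw [dg]
    congr 1
    ext b
    simp [extend_adj_val_val]
  · rw [if_congr (extend_adj_val_i0 j H a) rfl rfl]
lemma dg_restrict (T : SimpleGraph V) (a : {x : V // x ≠ i0}) :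
    dg T a.val = (if T.Adj a.val i0 then 1 else 0) + dg (restrictG i0 T) a := by
  rw [dg, card_filter_split i0]
  congr 1

end Leaf

section Walks
variable {i0 : V}

lemma exists_adj_head {G : SimpleGraph V} {x v : V} (r : G.Walk x v) (hr : ¬r.Nil) :
    ∃ b, G.Adj x b ∧ b ∈ r.support.tail ∧ s(x, b) ∈ r.edges := by
  cases r with
  | nil => simp at hr
  | cons h p =>
    exact ⟨_, h, by simp [SimpleGraph.Walk.support_cons, SimpleGraph.Walk.start_mem_support],
      by simp [SimpleGraph.Walk.edges_cons]⟩

lemma not_mem_support_of_leaf {T : SimpleGraph V} (hdeg : dg T i0 = 1) {u v : V}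
    (hu : u ≠ i0) (hv : v ≠ i0) {p : T.Walk u v} (hp : p.IsPath) : i0 ∉ p.support := by
  intro hmem
  obtain ⟨b, hb_adj, hb_mem, -⟩ := exists_adj_head (p.dropUntil i0 hmem)
    (SimpleGraph.Walk.not_nil_of_ne (Ne.symm hv))
  obtain ⟨a, ha_adj, ha_mem, -⟩ := exists_adj_head (p.takeUntil i0 hmem).reverse
    (SimpleGraph.Walk.not_nil_of_ne (Ne.symm hu))
  have hab : a = b := dg_unique hdeg ha_adj hb_adj
  have hmem_q : a ∈ (p.takeUntil i0 hmem).support := by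
    have h1 := List.tail_subset _ ha_mem
    rw [SimpleGraph.Walk.support_reverse] at h1
    exact List.mem_reverse.1 h1
  have hnd := hp.support_nodup
  rw [← SimpleGraph.Walk.take_spec p hmem, SimpleGraph.Walk.support_append] at hnd
  exact (List.nodup_append.1 hnd).2.2 a hmem_q a (hab ▸ hb_mem) rfl

lemma lift_walk {G : SimpleGraph V} :
    ∀ {u v : V} (p : G.Walk u v) (hu : u ≠ i0) (hv : v ≠ i0),
      (∀ x ∈ p.support, x ≠ i0) →
      ∃ q : (restrictG i0 G).Walk ⟨u, hu⟩ ⟨v, hv⟩,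
        q.map (SimpleGraph.Embedding.comap (Function.Embedding.subtype _) G).toHom = p := by
  intro u v p
  induction p with
  | nil => intro hu hv _; exact ⟨SimpleGraph.Walk.nil, rfl⟩
  | @cons u w v h p ih =>
    intro hu hv hs
    have hw : w ≠ i0 := hs w (by simp [SimpleGraph.Walk.support_cons,
      SimpleGraph.Walk.start_mem_support])
    obtain ⟨q, hq⟩ := ih hw hv (fun x hx => hs x (by simp [SimpleGraph.Walk.support_cons, hx]))
    refine ⟨SimpleGraph.Walk.cons (show (restrictG i0 G).Adj ⟨u, hu⟩ ⟨w, hw⟩ from h) q, ?_⟩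
    subst hq; rfl

lemma cycle_at_deg_one {G : SimpleGraph V} {w : V} (hdeg : dg G w = 1)
    {c : G.Walk w w} (hc : c.IsCycle) : False := by
  cases c with
  | nil => exact absurd hc.three_le_length (by simp)
  | @cons _ x _ h q =>
    have hen : (SimpleGraph.Walk.cons h q).edges.Nodup := hc.isCircuit.isTrail.edges_nodup
    rw [SimpleGraph.Walk.edges_cons] at hen
    have hnotmem := (List.nodup_cons.1 hen).1
    obtain ⟨b, hb_adj, -, hb_edge⟩ := exists_adj_head q.reverse
      (SimpleGraph.Walk.not_nil_of_ne h.ne)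
    have hbx : b = x := dg_unique hdeg hb_adj h
    rw [SimpleGraph.Walk.edges_reverse] at hb_edge
    subst hbx
    exact hnotmem (List.mem_reverse.1 hb_edge)

lemma restrict_isTree {T : SimpleGraph V} (hT : T.IsTree) (h3 : 3 ≤ Fintype.card V)
    (hdeg : dg T i0 = 1) : (restrictG i0 T).IsTree := by
  obtain ⟨w, hw⟩ := Fintype.exists_ne_of_one_lt_card (by omega) i0
  rw [SimpleGraph.isTree_iff]
  constructor
  · rw [SimpleGraph.connected_iff]
    refine ⟨fun a b => ?_, ⟨⟨w, hw⟩⟩⟩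
    obtain ⟨p0⟩ := hT.isConnected.preconnected a.val b.val
    classical
    have hp : (p0.toPath : T.Walk a.val b.val).IsPath := p0.toPath.isPath
    have hni := not_mem_support_of_leaf hdeg a.prop b.prop hp
    obtain ⟨q, -⟩ := lift_walk (p0.toPath : T.Walk a.val b.val) a.prop b.prop
      (fun x hx hx0 => hni (hx0 ▸ hx))
    exact ⟨q⟩
  · intro v c hc
    have hinj : Function.Injective
        (SimpleGraph.Embedding.comap (Function.Embedding.subtype (fun x => x ≠ i0)) T).toHom :=
      Subtype.val_injective
    exact ((SimpleGraph.isTree_iff _).1 hT).2 _ ((SimpleGraph.Walk.map_isCycle_iff_of_injective hinj).2 hc)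

def homExt (j : {x : V // x ≠ i0}) (H : SimpleGraph {x : V // x ≠ i0}) :
    H →g extendG i0 j H :=
  ⟨fun x => x.val, fun {x y} h => (extend_adj_val_val j H x y).2 h⟩

lemma extend_isTree {H : SimpleGraph {x : V // x ≠ i0}} (hH : H.IsTree)
    (j : {x : V // x ≠ i0}) : (extendG i0 j H).IsTree := by
  rw [SimpleGraph.isTree_iff]
  constructor
  · rw [SimpleGraph.connected_iff]
    refine ⟨fun a b => ?_, ⟨i0⟩⟩
    have key : ∀ a : V, (extendG i0 j H).Reachable a j.val := by
      intro a
      by_cases ha : a = i0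
      · subst ha
        exact ((extend_adj_i0 j H j.val).2 rfl).reachable
      · obtain ⟨p⟩ := hH.isConnected.preconnected ⟨a, ha⟩ j
        exact ⟨(p.map (homExt j H)).copy (by rfl) (by rfl)⟩
    exact (key a).trans (key b).symm
  · intro v c hc
    classical
    by_cases hi : i0 ∈ c.support
    · exact cycle_at_deg_one (dg_extend_i0 j H) (hc.rotate hi)
    · have hv : v ≠ i0 := fun h => hi (h ▸ c.start_mem_support)
      obtain ⟨q, hq⟩ := lift_walk c hv hv (fun x hx hx0 => hi (hx0 ▸ hx))
      have hinj : Function.Injective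
          (SimpleGraph.Embedding.comap (Function.Embedding.subtype (fun x => x ≠ i0))
            (extendG i0 j H)).toHom := Subtype.val_injective
      have hqc : q.IsCycle := (SimpleGraph.Walk.map_isCycle_iff_of_injective hinj).1 (hq ▸ hc)
      have hac : (restrictG i0 (extendG i0 j H)).IsAcyclic := by
        rw [restrict_extend]
        exact ((SimpleGraph.isTree_iff _).1 hH).2
      exact hac q hqc

end Walks

lemma natCard_neighborSet (G : SimpleGraph V) (i : V) :
    Nat.card (G.neighborSet i) = dg G i := by
  rw [Nat.card_eq_fintype_card, dg]
  rw [Fintype.card_eq_nat_card, Nat.card_coe_set_eq, Set.ncard_eq_toFinset_card']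
  congr 1
  ext b
  simp [SimpleGraph.mem_neighborSet]

lemma one_le_dg {G : SimpleGraph V} (hG : G.Connected) (h2 : 2 ≤ Fintype.card V) (i : V) :
    1 ≤ dg G i := by
  obtain ⟨w, hw⟩ := Fintype.exists_ne_of_one_lt_card (by omega) i
  obtain ⟨p⟩ := hG.preconnected i w
  cases p with
  | nil => exact absurd rfl hw
  | cons h p => exact Finset.card_pos.2 ⟨_, Finset.mem_filter.2 ⟨Finset.mem_univ _, h⟩⟩

lemma sum_dg_tree {G : SimpleGraph V} (hG : G.IsTree) :
    ∑ i, dg G i = 2 * (Fintype.card V - 1) := by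
  classical
  letI : DecidableRel G.Adj := Classical.decRel _
  have h1 : ∀ i, dg G i = G.degree i := by
    intro i
    rw [dg, SimpleGraph.degree]
    congr 1
    ext b
    simp [SimpleGraph.mem_neighborFinset]
  have h2 := G.sum_degrees_eq_twice_card_edges
  have h3 := hG.card_edgeFinset
  simp only [h1, h2]
  omega

noncomputable def leafNbr (T : SimpleGraph V) (i0 : V) : V :=
  if h : ∃ b, T.Adj i0 b then h.choose else i0

lemma leafNbr_adj {T : SimpleGraph V} {i0 : V} (h : 1 ≤ dg T i0) :
    T.Adj i0 (leafNbr T i0) := by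
  obtain ⟨b, hb⟩ := Finset.card_pos.1 h
  have hb' : T.Adj i0 b := (Finset.mem_filter.1 hb).2
  rw [leafNbr, dif_pos ⟨b, hb'⟩]
  exact (⟨b, hb'⟩ : ∃ b, T.Adj i0 b).choose_spec

lemma leafNbr_ne {T : SimpleGraph V} {i0 : V} (h : 1 ≤ dg T i0) :
    leafNbr T i0 ≠ i0 := (leafNbr_adj h).ne'

lemma card_filter_prod {α β : Type} [Fintype α] [Fintype β] (P : α → β → Prop)
    [∀ a b, Decidable (P a b)] :
    #(univ.filter fun p : α × β => P p.1 p.2) = ∑ a, #(univ.filter fun b => P a b) := by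
  rw [Finset.card_filter, Fintype.sum_prod_type]
  exact Finset.sum_congr rfl fun a _ => (Finset.card_filter _ _).symm

set_option maxHeartbeats 1000000 in
lemma card_step {i0 : V} (h3 : 3 ≤ Fintype.card V) (c : V → ℕ) (hc0 : c i0 = 0) :
    #(univ.filter fun T : SimpleGraph V => T.IsTree ∧ ∀ i, dg T i = c i + 1) =
    ∑ j : {x : V // x ≠ i0}, #(univ.filter fun H : SimpleGraph {x : V // x ≠ i0} =>
      H.IsTree ∧ ∀ i, dg H i = (c i.val + 1) - (if i = j then 1 else 0)) := by
  classical
  refine Eq.trans ?_ (card_filter_prod fun (j : {x : V // x ≠ i0})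
    (H : SimpleGraph {x : V // x ≠ i0}) =>
    H.IsTree ∧ ∀ i, dg H i = (c i.val + 1) - (if i = j then 1 else 0))
  refine Finset.card_bij'
    (fun T hT => (⟨leafNbr T i0, ?_⟩, restrictG i0 T))
    (fun p hp => extendG i0 p.1 p.2) ?_ ?_ ?_ ?_
  · -- leafNbr ≠ i0
    have hmem := (Finset.mem_filter.1 hT).2
    have hdeg : dg T i0 = 1 := by rw [hmem.2 i0, hc0]
    exact leafNbr_ne (le_of_eq hdeg.symm)
  · -- forward membership
    intro T hT
    have hmem := (Finset.mem_filter.1 hT).2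
    have hdeg : dg T i0 = 1 := by rw [hmem.2 i0, hc0]
    have hadj : T.Adj i0 (leafNbr T i0) := leafNbr_adj (le_of_eq hdeg.symm)
    refine Finset.mem_filter.2 ⟨Finset.mem_univ _, restrict_isTree hmem.1 h3 hdeg, ?_⟩
    intro a
    dsimp only
    have hsplit := dg_restrict (i0 := i0) T a
    have hiff : T.Adj a.val i0 ↔ a = (⟨leafNbr T i0, leafNbr_ne (le_of_eq hdeg.symm)⟩ :
        {x : V // x ≠ i0}) := by
      constructor
      · intro h
        exact Subtype.ext (dg_unique hdeg h.symm hadj)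
      · intro h
        rw [Subtype.ext_iff] at h
        rw [h]
        exact hadj.symm
    rw [hmem.2 a.val] at hsplit
    by_cases hcase : a = (⟨leafNbr T i0, leafNbr_ne (le_of_eq hdeg.symm)⟩ : {x : V // x ≠ i0})
    · rw [if_pos hcase]
      rw [if_pos (hiff.2 hcase)] at hsplit
      omega
    · rw [if_neg hcase]
      rw [if_neg (fun h => hcase (hiff.1 h))] at hsplit
      omega
  · -- backward membership
    rintro ⟨j, H⟩ hp
    have hmem := (Finset.mem_filter.1 hp).2
    dsimp only at hmem
    refine Finset.mem_filter.2 ⟨Finset.mem_univ _, extend_isTree hmem.1 j, ?_⟩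
    intro i
    by_cases hi : i = i0
    · subst hi
      rw [dg_extend_i0, hc0]
    · have hv := dg_extend_val j H ⟨i, hi⟩
      have hm := hmem.2 ⟨i, hi⟩
      by_cases hcase : (⟨i, hi⟩ : {x : V // x ≠ i0}) = j
      · simp only [hcase, if_pos rfl] at hv hm ⊢
        rw [hv, hm]
        simp
      · simp only [if_neg hcase] at hv hm
        rw [hv, hm]
        omega
  · -- left inverse
    intro T hT
    have hmem := (Finset.mem_filter.1 hT).2
    have hdeg : dg T i0 = 1 := by rw [hmem.2 i0, hc0]
    exact extend_restrict hdeg (leafNbr_adj (le_of_eq hdeg.symm))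
  · -- right inverse
    rintro ⟨j, H⟩ hp
    have hdeg : dg (extendG i0 j H) i0 = 1 := dg_extend_i0 j H
    have hadj := leafNbr_adj (T := extendG i0 j H) (i0 := i0) (le_of_eq hdeg.symm)
    have hj : leafNbr (extendG i0 j H) i0 = j.val := (extend_adj_i0 j H _).1 hadj
    refine Prod.ext (Subtype.ext hj) ?_
    exact restrict_extend j H

lemma dg_top (i : V) : dg (⊤ : SimpleGraph V) i = Fintype.card V - 1 := by
  rw [← natCard_neighborSet]
  have h1 : (⊤ : SimpleGraph V).neighborSet i = {x | x ≠ i} := by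
    ext x
    simp [SimpleGraph.mem_neighborSet, ne_comm]
  rw [h1]
  have h2 : Nat.card ({x | x ≠ i} : Set V) = Nat.card {x : V // ¬ x = i} := rfl
  rw [h2, Nat.card_eq_fintype_card, Fintype.card_subtype_compl, Fintype.card_subtype_eq]

lemma card_filter_iff {α : Type} [Fintype α] (p q : α → Prop) [DecidablePred p]
    [DecidablePred q] (h : ∀ x, p x ↔ q x) : #(univ.filter p) = #(univ.filter q) := by
  rw [Finset.card_filter, Finset.card_filter]
  exact Finset.sum_congr rfl fun x _ => if_congr (h x) rfl rfl

theorem treeCount (n : ℕ) : ∀ (V : Type) [Fintype V] [DecidableEq V],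
    Fintype.card V = n → 2 ≤ n → ∀ c : V → ℕ, (∑ i, c i = n - 2) →
    #(univ.filter fun T : SimpleGraph V => T.IsTree ∧ ∀ i, dg T i = c i + 1) *
      ∏ i, (c i).factorial = (n - 2).factorial := by
  induction n using Nat.strong_induction_on with
  | _ n IH =>
  intro V _ _ hcard hn c hsum
  by_cases h2 : n = 2
  · -- base case
    subst h2
    have hc : ∀ i, c i = 0 := fun i =>
      Finset.sum_eq_zero_iff.1 hsum i (Finset.mem_univ i)
    have hset : (univ.filter fun T : SimpleGraph V => T.IsTree ∧ ∀ i, dg T i = c i + 1)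
        = {(⊤ : SimpleGraph V)} := by
      ext T
      simp only [Finset.mem_filter, Finset.mem_univ, true_and, Finset.mem_singleton]
      constructor
      · rintro ⟨hT, -⟩
        ext a b
        simp only [SimpleGraph.top_adj]
        constructor
        · exact fun h => h.ne
        · intro hab
          obtain ⟨p⟩ := hT.isConnected.preconnected a b
          cases p with
          | nil => exact absurd rfl hab
          | @cons _ x _ h p =>
            have h1 : Fintype.card {y : V // ¬ y = a} ≤ 1 := by
              rw [Fintype.card_subtype_compl, Fintype.card_subtype_eq, hcard]
            have h2 := Fintype.card_le_one_iff.1 h1 ⟨x, h.ne'⟩ ⟨b, Ne.symm hab⟩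
            have hxb : x = b := congrArg Subtype.val h2
            exact hxb ▸ h
      · rintro rfl
        have hne : Nonempty V := Fintype.card_pos_iff.1 (by omega)
        constructor
        · rw [SimpleGraph.isTree_iff]
          refine ⟨SimpleGraph.connected_top, ?_⟩
          intro v cyc hcyc
          have h3 := hcyc.three_le_length
          have hnd := hcyc.support_nodup
          have hle := hnd.length_le_card
          rw [List.length_tail, SimpleGraph.Walk.length_support, hcard] at hle
          omega
        · intro i
          rw [hc i, dg_top, hcard]
    rw [hset]
    simp [hc]
  · -- inductive step
    have hn3 : 3 ≤ n := by omega
    have hc0ex : ∃ i0, c i0 = 0 := by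
      by_contra hall
      push_neg at hall
      have : ∑ i, c i ≥ ∑ i : V, 1 :=
        Finset.sum_le_sum fun i _ => Nat.one_le_iff_ne_zero.2 (hall i)
      simp [Finset.card_univ, hcard] at this
      omega
    obtain ⟨i0, hc0⟩ := hc0ex
    have hcV' : Fintype.card {x : V // x ≠ i0} = n - 1 := by
      have := Fintype.card_subtype_compl (fun x : V => x = i0)
      rw [Fintype.card_subtype_eq, hcard] at this
      exact this
    have hsum' : ∑ i : {x : V // x ≠ i0}, c i.val = n - 2 := by
      have := sum_split i0 c
      rw [hsum, hc0] at this
      omega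
    rw [card_step (by omega) c hc0]
    have hprodV : (∏ i : V, (c i).factorial) = ∏ i : {x : V // x ≠ i0}, (c i.val).factorial := by
      rw [prod_split i0, hc0]
      simp
    rw [hprodV, Finset.sum_mul]
    have hterm : ∀ j : {x : V // x ≠ i0},
        #(univ.filter fun H : SimpleGraph {x : V // x ≠ i0} =>
          H.IsTree ∧ ∀ i, dg H i = (c i.val + 1) - (if i = j then 1 else 0)) *
          ∏ i : {x : V // x ≠ i0}, (c i.val).factorial
        = c j.val * (n - 3).factorial := by
      intro j
      by_cases hcj : c j.val = 0
      · rw [Finset.filter_eq_empty_iff.2, hcj]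
        · simp
        · intro H _ hmem
          have hd := hmem.2 j
          rw [if_pos rfl, hcj] at hd
          have := one_le_dg hmem.1.isConnected (by omega) j
          omega
      · have hcj1 : 1 ≤ c j.val := Nat.one_le_iff_ne_zero.2 hcj
        set c' : {x : V // x ≠ i0} → ℕ := fun i => if i = j then c i.val - 1 else c i.val with hc'
        have hfe : (univ.filter fun H : SimpleGraph {x : V // x ≠ i0} =>
            H.IsTree ∧ ∀ i, dg H i = (c i.val + 1) - (if i = j then 1 else 0)) =
            (univ.filter fun H : SimpleGraph {x : V // x ≠ i0} =>
            H.IsTree ∧ ∀ i, dg H i = c' i + 1) := by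
          ext H
          simp only [Finset.mem_filter, Finset.mem_univ, true_and, hc']
          constructor
          · rintro ⟨hH, hd⟩
            refine ⟨hH, fun i => ?_⟩
            have := hd i
            by_cases hij : i = j
            · rw [if_pos hij] at this ⊢
              subst hij
              omega
            · rw [if_neg hij] at this ⊢
              omega
          · rintro ⟨hH, hd⟩
            refine ⟨hH, fun i => ?_⟩
            have := hd i
            by_cases hij : i = j
            · rw [if_pos hij] at this ⊢
              subst hij
              omega
            · rw [if_neg hij] at this ⊢
              omega
        have hsumc' : ∑ i : {x : V // x ≠ i0}, c' i = (n - 1) - 2 := by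
          have e1 : c' j + ∑ x ∈ univ.erase j, c' x = ∑ x : {x : V // x ≠ i0}, c' x :=
            Finset.add_sum_erase univ c' (Finset.mem_univ j)
          have e2 : c j.val + ∑ x ∈ univ.erase j, c x.val = n - 2 := by
            rw [← hsum']
            exact Finset.add_sum_erase univ (fun i : {x : V // x ≠ i0} => c i.val)
              (Finset.mem_univ j)
          have e3 : ∑ x ∈ univ.erase j, c' x
              = ∑ x ∈ univ.erase j, c x.val :=
            Finset.sum_congr rfl fun x hx => if_neg (Finset.ne_of_mem_erase hx)
          have e4 : c' j = c j.val - 1 := if_pos rfl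
          omega
        have hIH := IH (n - 1) (by omega) {x : V // x ≠ i0} hcV' (by omega) c' hsumc'
        have hprodc : (∏ i : {x : V // x ≠ i0}, (c i.val).factorial)
            = (∏ i : {x : V // x ≠ i0}, (c' i).factorial) * c j.val := by
          rw [← Finset.mul_prod_erase univ (fun i : {x : V // x ≠ i0} => (c i.val).factorial)
            (Finset.mem_univ j)]
          rw [← Finset.mul_prod_erase univ (fun i : {x : V // x ≠ i0} => (c' i).factorial)
            (Finset.mem_univ j)]
          have e3 : ∏ x ∈ univ.erase j, (c' x).factorial
              = ∏ x ∈ univ.erase j, (c x.val).factorial :=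
            Finset.prod_congr rfl fun x hx =>
              congrArg Nat.factorial (if_neg (Finset.ne_of_mem_erase hx))
          rw [e3]
          have e5 : c' j = c j.val - 1 := if_pos rfl
          have e4 : (c j.val).factorial = c j.val * (c' j).factorial := by
            rw [e5]
            conv_lhs => rw [show c j.val = (c j.val - 1) + 1 from by omega]
            rw [Nat.factorial_succ]
            congr 1
            omega
          rw [e4]
          ring
        rw [hfe, hprodc, ← mul_assoc, hIH]
        have : (n - 1) - 2 = n - 3 := by omega
        rw [this]
        ring
    rw [Finset.sum_congr rfl fun j _ => hterm j]
    rw [← Finset.sum_mul, hsum']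
    have h1 : n - 2 = (n - 3) + 1 := by omega
    rw [h1, Nat.factorial_succ]

noncomputable def cnt {m : ℕ} (f : Fin m → V) (i : V) : ℕ :=
  #(univ.filter fun k => f k = i)

lemma cnt_sum {m : ℕ} (f : Fin m → V) : ∑ i, cnt f i = m := by
  simp only [cnt, Finset.card_filter]
  rw [Finset.sum_comm]
  have h1 : ∀ k : Fin m, (∑ i : V, if f k = i then (1:ℕ) else 0) = 1 := by
    intro k
    rw [Finset.sum_ite_eq univ (f k) (fun _ => (1:ℕ))]
    simp
  simp [h1]

lemma cnt_zero (f : Fin 0 → V) (i : V) : cnt f i = 0 := by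
  simp [cnt]

lemma cnt_cons {m : ℕ} (v : V) (g : Fin m → V) (i : V) :
    cnt (Fin.cons v g) i = (if v = i then 1 else 0) + cnt g i := by
  simp only [cnt, Finset.card_filter]
  rw [Fin.sum_univ_succ]
  simp [Fin.cons_zero, Fin.cons_succ]

lemma asc_succ (x : ℝ) (k : ℕ) : ascFac x (k + 1) = ascFac x k * (x + k) :=
  Finset.prod_range_succ _ _

theorem funCount : ∀ (m : ℕ) (c : V → ℕ), (∑ i, c i = m) →
    #(univ.filter fun f : Fin m → V => ∀ i, cnt f i = c i) * ∏ i, (c i).factorial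
      = m.factorial := by
  intro m
  induction m with
  | zero =>
    intro c hc
    have hc0 : ∀ i, c i = 0 := fun i => Finset.sum_eq_zero_iff.1 hc i (Finset.mem_univ i)
    have h1 : (univ.filter fun f : Fin 0 → V => ∀ i, cnt f i = c i) = univ := by
      apply Finset.filter_true_of_mem
      intro f _ i
      rw [cnt_zero, hc0]
    rw [h1]
    simp [hc0, Finset.card_univ]
  | succ m ih =>
    intro c hc
    have step1 : #(univ.filter fun f : Fin (m+1) → V => ∀ i, cnt f i = c i)
        = ∑ p : V × (Fin m → V), if (∀ i, cnt (Fin.cons p.1 p.2) i = c i) then (1:ℕ) else 0 := by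
      rw [Finset.card_filter]
      exact (Fintype.sum_equiv (Fin.consEquiv fun _ => V) _
        (fun f => if (∀ i, cnt f i = c i) then (1:ℕ) else 0) (fun p => rfl)).symm
    rw [step1, Fintype.sum_prod_type]
    have cond_iff : ∀ (v : V) (g : Fin m → V),
        (∀ i, cnt (Fin.cons v g) i = c i) ↔
        (1 ≤ c v ∧ ∀ i, cnt g i = c i - (if i = v then 1 else 0)) := by
      intro v g
      constructor
      · intro h
        have hv := h v
        rw [cnt_cons, if_pos rfl] at hv
        refine ⟨by omega, fun i => ?_⟩
        have hi := h i
        rw [cnt_cons] at hi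
        by_cases hiv : i = v
        · subst hiv
          rw [if_pos rfl]
          omega
        · rw [if_neg (fun hh => hiv hh.symm)] at hi
          rw [if_neg hiv]
          omega
      · rintro ⟨hv, h⟩ i
        rw [cnt_cons]
        have hi := h i
        by_cases hiv : i = v
        · subst hiv
          rw [if_pos rfl] at hi ⊢
          omega
        · rw [if_neg hiv] at hi
          rw [if_neg (fun hh => hiv hh.symm)]
          omega
    have inner : ∀ v : V, (∑ g : Fin m → V,
        if (∀ i, cnt (Fin.cons v g) i = c i) then (1:ℕ) else 0)
        = if 1 ≤ c v then #(univ.filter fun g : Fin m → V =>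
            ∀ i, cnt g i = c i - (if i = v then 1 else 0)) else 0 := by
      intro v
      by_cases hv : 1 ≤ c v
      · rw [if_pos hv, Finset.card_filter]
        refine Finset.sum_congr rfl fun g _ => ?_
        exact if_congr (by rw [cond_iff]; simp [hv]) rfl rfl
      · rw [if_neg hv]
        refine Finset.sum_eq_zero fun g _ => ?_
        rw [if_neg]
        rw [cond_iff]
        rintro ⟨h1, -⟩
        exact hv h1
    rw [Finset.sum_congr rfl fun v _ => inner v, Finset.sum_mul]
    have hterm : ∀ v : V, ((if 1 ≤ c v then #(univ.filter fun g : Fin m → V =>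
          ∀ i, cnt g i = c i - (if i = v then 1 else 0)) else 0) * ∏ i, (c i).factorial)
        = c v * m.factorial := by
      intro v
      by_cases hv : 1 ≤ c v
      · rw [if_pos hv]
        set c' : V → ℕ := fun i => c i - (if i = v then 1 else 0) with hc'
        have e1 : c' v + ∑ x ∈ univ.erase v, c' x = ∑ x : V, c' x :=
          Finset.add_sum_erase univ c' (Finset.mem_univ v)
        have e2 : c v + ∑ x ∈ univ.erase v, c x = m + 1 := by
          rw [← hc]
          exact Finset.add_sum_erase univ c (Finset.mem_univ v)
        have e3 : ∑ x ∈ univ.erase v, c' x = ∑ x ∈ univ.erase v, c x :=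
          Finset.sum_congr rfl fun x hx => by
            show c x - (if x = v then 1 else 0) = c x
            rw [if_neg (Finset.ne_of_mem_erase hx), Nat.sub_zero]
        have e4 : c' v = c v - 1 := by
          show c v - (if v = v then 1 else 0) = c v - 1
          rw [if_pos rfl]
        have hsum' : ∑ i, c' i = m := by omega
        have hIH := ih c' hsum'
        have hprodc : (∏ i, (c i).factorial) = (∏ i, (c' i).factorial) * c v := by
          rw [← Finset.mul_prod_erase univ (fun i => (c i).factorial) (Finset.mem_univ v)]
          rw [← Finset.mul_prod_erase univ (fun i => (c' i).factorial) (Finset.mem_univ v)]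
          have e5 : ∏ x ∈ univ.erase v, (c' x).factorial
              = ∏ x ∈ univ.erase v, (c x).factorial :=
            Finset.prod_congr rfl fun x hx => by
              show (c x - (if x = v then 1 else 0)).factorial = (c x).factorial
              rw [if_neg (Finset.ne_of_mem_erase hx), Nat.sub_zero]
          rw [e5]
          have e6 : (c v).factorial = c v * (c' v).factorial := by
            rw [e4]
            conv_lhs => rw [show c v = (c v - 1) + 1 from by omega]
            rw [Nat.factorial_succ]
            congr 1
            omega
          rw [e6]
          ring
        rw [hprodc, ← mul_assoc, hIH]
        ring
      · rw [if_neg hv]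
        have : c v = 0 := by omega
        rw [this]
        simp
    rw [Finset.sum_congr rfl fun v _ => hterm v, ← Finset.sum_mul, hc, Nat.factorial_succ]

theorem ascVand : ∀ (m : ℕ) (y : V → ℝ),
    (∑ f : Fin m → V, ∏ i, ascFac (y i) (cnt f i)) = ascFac (∑ i, y i) m := by
  intro m
  induction m with
  | zero =>
    intro y
    have h1 : ∀ f : Fin 0 → V, ∏ i, ascFac (y i) (cnt f i) = 1 := by
      intro f
      refine Finset.prod_eq_one fun i _ => ?_
      rw [cnt_zero]
      simp [ascFac]
    rw [Finset.sum_congr rfl fun f _ => h1 f, Finset.sum_const, Finset.card_univ]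
    simp [ascFac]
  | succ m ih =>
    intro y
    have step1 : (∑ f : Fin (m+1) → V, ∏ i, ascFac (y i) (cnt f i))
        = ∑ p : V × (Fin m → V), ∏ i, ascFac (y i) (cnt (Fin.cons p.1 p.2) i) :=
      (Fintype.sum_equiv (Fin.consEquiv fun _ => V) _ _ (fun p => rfl)).symm
    rw [step1, Fintype.sum_prod_type]
    have hprod : ∀ (v : V) (g : Fin m → V),
        (∏ i, ascFac (y i) (cnt (Fin.cons v g) i))
        = (y v + (cnt g v : ℝ)) * ∏ i, ascFac (y i) (cnt g i) := by
      intro v g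
      rw [← Finset.mul_prod_erase univ
        (fun i => ascFac (y i) (cnt (Fin.cons v g) i)) (Finset.mem_univ v)]
      rw [← Finset.mul_prod_erase univ
        (fun i => ascFac (y i) (cnt g i)) (Finset.mem_univ v)]
      have h2 : ∏ i ∈ univ.erase v, ascFac (y i) (cnt (Fin.cons v g) i)
          = ∏ i ∈ univ.erase v, ascFac (y i) (cnt g i) := by
        refine Finset.prod_congr rfl fun i hi => ?_
        rw [cnt_cons, if_neg (fun h => (Finset.ne_of_mem_erase hi) h.symm), zero_add]
      rw [h2]
      show ascFac (y v) (cnt (Fin.cons v g) v) * _ = _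
      rw [cnt_cons, if_pos rfl, add_comm 1 (cnt g v), asc_succ]
      ring
    rw [Finset.sum_congr rfl fun v _ => Finset.sum_congr rfl fun g _ => hprod v g]
    rw [Finset.sum_comm]
    have hrow : ∀ g : Fin m → V,
        (∑ v, (y v + (cnt g v : ℝ)) * ∏ i, ascFac (y i) (cnt g i))
        = ((∑ i, y i) + (m:ℝ)) * ∏ i, ascFac (y i) (cnt g i) := by
      intro g
      rw [← Finset.sum_mul]
      congr 1
      rw [Finset.sum_add_distrib]
      congr 1
      rw [← Nat.cast_sum]
      rw [cnt_sum]
    rw [Finset.sum_congr rfl fun g _ => hrow g, ← Finset.mul_sum, ih y, asc_succ]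
    ring


/-- The main identity after the substitution `y_i = x_i + 1`: `L_n(y) = R_n(y)`. -/
theorem L_eq_R (n : ℕ) (hn : 2 ≤ n) (y : Fin n → ℝ) :
    Lpoly n y = Rpoly n y := by
  classical
  have hdg : ∀ (T : SimpleGraph (Fin n)) (i : Fin n), treeDeg T i = dg T i :=
    fun T i => natCard_neighborSet T i
  have hR : Rpoly n y = ascFac (∑ i, y i) (n - 2) := rfl
  have hcard2 : 2 ≤ Fintype.card (Fin n) := by rw [Fintype.card_fin]; omega
  set gT : SimpleGraph (Fin n) → (Fin n → ℕ) := fun T i => dg T i - 1 with hgT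
  set cF : (Fin (n-2) → Fin n) → (Fin n → ℕ) := fun f i => cnt f i with hcF
  set t : Finset (Fin n → ℕ) := (treeFinset n).image gT ∪ univ.image cF with ht
  set W : (Fin n → ℕ) → ℝ := fun c => ∏ i, ascFac (y i) (c i) with hW
  have hL : Lpoly n y = ∑ c ∈ t, ∑ T ∈ (treeFinset n).filter (fun T => gT T = c), W (gT T) := by
    rw [Lpoly]
    rw [Finset.sum_congr rfl fun T _ => show (∏ i, ascFac (y i) (treeDeg T i - 1)) = W (gT T)
      from Finset.prod_congr rfl fun i _ => by rw [hdg]]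
    exact (Finset.sum_fiberwise_of_maps_to
      (fun T hT => Finset.mem_union_left _ (Finset.mem_image_of_mem gT hT)) _).symm
  have hRR : Rpoly n y = ∑ c ∈ t, ∑ f ∈ univ.filter (fun f : Fin (n-2) → Fin n => cF f = c),
      W (cF f) := by
    rw [hR, ← ascVand (n-2) y]
    exact (Finset.sum_fiberwise_of_maps_to
      (fun f _ => Finset.mem_union_right _ (Finset.mem_image_of_mem cF (Finset.mem_univ f))) _).symm
  rw [hL, hRR]
  refine Finset.sum_congr rfl fun c hc => ?_
  have hWc1 : ∑ T ∈ (treeFinset n).filter (fun T => gT T = c), W (gT T)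
      = #((treeFinset n).filter (fun T => gT T = c)) • W c := by
    rw [← Finset.sum_const]
    exact Finset.sum_congr rfl fun T hT => by rw [(Finset.mem_filter.1 hT).2]
  have hWc2 : ∑ f ∈ univ.filter (fun f : Fin (n-2) → Fin n => cF f = c), W (cF f)
      = #(univ.filter (fun f : Fin (n-2) → Fin n => cF f = c)) • W c := by
    rw [← Finset.sum_const]
    exact Finset.sum_congr rfl fun f hf => by rw [(Finset.mem_filter.1 hf).2]
  rw [hWc1, hWc2]
  congr 1
  -- key cardinality identity
  have hcsum : ∑ i, c i = n - 2 := by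
    rcases Finset.mem_union.1 hc with h | h
    · obtain ⟨T, hT, rfl⟩ := Finset.mem_image.1 h
      have hTtree : T.IsTree := by
        have := hT
        rw [treeFinset, Finset.mem_filter] at this
        exact this.2
      have h1 : ∀ i, 1 ≤ dg T i := fun i => one_le_dg hTtree.isConnected hcard2 i
      have h2 := sum_dg_tree hTtree
      rw [Fintype.card_fin] at h2
      have h3 : (∑ i, (dg T i - 1)) + ∑ _i : Fin n, 1 = ∑ i, dg T i := by
        rw [← Finset.sum_add_distrib]
        exact Finset.sum_congr rfl fun i _ => by have := h1 i; omega
      have h4 : (∑ _i : Fin n, (1:ℕ)) = n := by simp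
      show (∑ i, (dg T i - 1)) = n - 2
      omega
    · obtain ⟨f, -, rfl⟩ := Finset.mem_image.1 h
      exact cnt_sum f
  have htree : ((treeFinset n).filter fun T => gT T = c)
      = (univ.filter fun T : SimpleGraph (Fin n) => T.IsTree ∧ ∀ i, dg T i = c i + 1) := by
    ext T
    rw [treeFinset]
    simp only [Finset.mem_filter, Finset.mem_univ, true_and, funext_iff, hgT]
    constructor
    · rintro ⟨hT, hg⟩
      refine ⟨hT, fun i => ?_⟩
      have := hg i
      have h1 := one_le_dg hT.isConnected hcard2 i
      omega
    · rintro ⟨hT, hdd⟩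
      refine ⟨hT, fun i => ?_⟩
      rw [hdd i]
      omega
  have hfun : (univ.filter fun f : Fin (n-2) → Fin n => cF f = c)
      = (univ.filter fun f : Fin (n-2) → Fin n => ∀ i, cnt f i = c i) := by
    ext f
    simp only [Finset.mem_filter, Finset.mem_univ, true_and, funext_iff, hcF]
  rw [htree, hfun]
  have ht1 := treeCount n (Fin n) (Fintype.card_fin n) hn c hcsum
  have ht2 := funCount (n - 2) c hcsum
  have hpos : 0 < ∏ i, (c i).factorial := Finset.prod_pos fun i _ => Nat.factorial_pos _
  refine Nat.eq_of_mul_eq_mul_right hpos ?_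
  have hkey := ht1.trans ht2.symm
  convert hkey using 4
end

section
/- Let n ≥ 3 and let T be a vertex-labeled tree on {1, …, n−1}. For each a ∈ {1, …, n−1}, let T^{(a)} denote the vertex-labeled tree on {1, …, n} obtained from T by attaching the vertex n as a leaf adjacent to a; these are exactly the trees on {1, …, n} in which n is a leaf and whose restriction to {1, …, n−1} is T. Then for all real numbers y_1, …, y_{n−1} (with y_n = 0), ∑_{a=1}^{n−1} w(T^{(a)}) = ∑_{a=1}^{n−1} (y_a + d_T(a) − 1) · w(T) = ((∑_{a=1}^{n−1} y_a) + n − 3) · w(T), where w(S) := ∏_i [y_i(y_i+1)⋯(y_i+d_S(i)−2)] with each factor the ascending factorial of y_i with d_S(i)−1 factors. -/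
open scoped Classical

/-- `T^{(a)}`: the graph on `Fin (m+1)` obtained from a graph `T` on `Fin m` by attaching
the last vertex as a leaf adjacent to `a`. -/
def attachLeaf {m : ℕ} (T : SimpleGraph (Fin m)) (a : Fin m) : SimpleGraph (Fin (m + 1)) :=
  SimpleGraph.fromEdgeSet
    ((Sym2.map Fin.castSucc '' T.edgeSet) ∪ {s(Fin.castSucc a, Fin.last m)})

lemma attachLeaf_adj {m : ℕ} (T : SimpleGraph (Fin m)) (a : Fin m) (u v : Fin (m+1)) :
    (attachLeaf T a).Adj u v ↔
      (∃ x y : Fin m, T.Adj x y ∧ u = x.castSucc ∧ v = y.castSucc) ∨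
      (u = a.castSucc ∧ v = Fin.last m) ∨ (u = Fin.last m ∧ v = a.castSucc) := by
  simp only [attachLeaf, SimpleGraph.fromEdgeSet_adj, Set.mem_union, Set.mem_image,
    Set.mem_singleton_iff, Sym2.eq_iff]
  constructor
  · rintro ⟨h | h, hne⟩
    · obtain ⟨e, he, hmap⟩ := h
      induction e using Sym2.ind with
      | _ x y =>
        rw [SimpleGraph.mem_edgeSet] at he
        simp only [Sym2.map_pair_eq, Sym2.eq_iff] at hmap
        rcases hmap with ⟨h1, h2⟩ | ⟨h1, h2⟩
        · exact Or.inl ⟨x, y, he, h1.symm, h2.symm⟩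
        · exact Or.inl ⟨y, x, he.symm, h2.symm, h1.symm⟩
    · tauto
  · rintro (⟨x, y, hxy, rfl, rfl⟩ | ⟨rfl, rfl⟩ | ⟨rfl, rfl⟩)
    · refine ⟨Or.inl ⟨s(x,y), hxy, by simp⟩, by simp [Fin.castSucc_inj, hxy.ne]⟩
    · exact ⟨Or.inr (Or.inl ⟨rfl, rfl⟩), (Fin.castSucc_lt_last a).ne⟩
    · exact ⟨Or.inr (Or.inr ⟨rfl, rfl⟩), (Fin.castSucc_lt_last a).ne.symm⟩

lemma treeDeg_eq_degree {n : ℕ} (G : SimpleGraph (Fin n)) (i : Fin n) :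
    treeDeg G i = G.degree i := by
  rw [treeDeg, ← SimpleGraph.card_neighborSet_eq_degree, Nat.card_eq_fintype_card]

lemma treeDeg_attachLeaf_last {m : ℕ} (T : SimpleGraph (Fin m)) (a : Fin m) :
    treeDeg (attachLeaf T a) (Fin.last m) = 1 := by
  have h : (attachLeaf T a).neighborSet (Fin.last m) = {a.castSucc} := by
    ext v
    simp only [SimpleGraph.mem_neighborSet, attachLeaf_adj, Set.mem_singleton_iff]
    constructor
    · rintro (⟨x, y, _, hx, _⟩ | ⟨hx, _⟩ | ⟨_, rfl⟩)
      · exact absurd hx.symm (Fin.castSucc_lt_last x).ne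
      · exact absurd hx.symm (Fin.castSucc_lt_last a).ne
      · rfl
    · rintro rfl; aesop
  rw [treeDeg, h]; simp

lemma treeDeg_attachLeaf_castSucc {m : ℕ} (T : SimpleGraph (Fin m)) (a j : Fin m) :
    treeDeg (attachLeaf T a) j.castSucc = treeDeg T j + (if j = a then 1 else 0) := by
  have h : (attachLeaf T a).neighborSet j.castSucc =
      Fin.castSucc '' T.neighborSet j ∪ (if j = a then {Fin.last m} else ∅) := by
    ext v
    simp only [SimpleGraph.mem_neighborSet, attachLeaf_adj, Set.mem_union, Set.mem_image]
    constructor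
    · rintro (⟨x, y, hxy, hx, rfl⟩ | ⟨hx, rfl⟩ | ⟨hx, _⟩)
      · rw [Fin.castSucc_inj] at hx; subst hx
        exact Or.inl ⟨y, hxy, rfl⟩
      · rw [Fin.castSucc_inj] at hx; subst hx
        simp
      · exact absurd hx (Fin.castSucc_lt_last j).ne
    · rintro (⟨x, hx, rfl⟩ | hv)
      · exact Or.inl ⟨j, x, hx, rfl, rfl⟩
      · split_ifs at hv with hja
        · subst hja
          rw [Set.mem_singleton_iff] at hv; subst hv
          exact Or.inr (Or.inl ⟨rfl, rfl⟩)
        · exact absurd hv (Set.notMem_empty v)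
  rw [treeDeg, treeDeg, h, Nat.card_coe_set_eq, Nat.card_coe_set_eq]
  rw [Set.ncard_union_eq]
  · rw [Set.ncard_image_of_injective _ (Fin.castSucc_injective m)]
    congr 1
    split_ifs <;> simp
  · rw [Set.disjoint_right]
    intro v hv
    split_ifs at hv with hja
    · rw [Set.mem_singleton_iff] at hv; subst hv
      rintro ⟨x, _, hx⟩
      exact (Fin.castSucc_lt_last x).ne hx
    · exact absurd hv (Set.notMem_empty v)

lemma one_le_treeDeg {m : ℕ} (hm : 2 ≤ m) (T : SimpleGraph (Fin m)) (hT : T.IsTree)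
    (j : Fin m) : 1 ≤ treeDeg T j := by
  rw [treeDeg_eq_degree]
  rw [Nat.one_le_iff_ne_zero, ← Nat.pos_iff_ne_zero, SimpleGraph.degree_pos_iff_exists_adj]
  have : 1 < Fintype.card (Fin m) := by simp only [Fintype.card_fin]; omega
  obtain ⟨w, hw⟩ := Fintype.exists_ne_of_one_lt_card this j
  obtain ⟨p⟩ := hT.isConnected.preconnected j w
  cases p with
  | nil => exact absurd rfl hw.symm
  | cons h _ => exact ⟨_, h⟩

lemma prod_attach_eq {m : ℕ} (hm : 2 ≤ m) (T : SimpleGraph (Fin m)) (hT : T.IsTree)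
    (y : Fin (m + 1) → ℝ) (a : Fin m) :
    (∏ i, ascFac (y i) (treeDeg (attachLeaf T a) i - 1)) =
      (y (Fin.castSucc a) + (treeDeg T a : ℝ) - 1) *
        ∏ i : Fin m, ascFac (y (Fin.castSucc i)) (treeDeg T i - 1) := by
  rw [Fin.prod_univ_castSucc]
  rw [treeDeg_attachLeaf_last]
  have hlast : ascFac (y (Fin.last m)) (1 - 1) = 1 := by simp [ascFac]
  rw [hlast, mul_one]
  rw [← Finset.mul_prod_erase Finset.univ _ (Finset.mem_univ a),
      ← Finset.mul_prod_erase Finset.univ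
        (fun i => ascFac (y (Fin.castSucc i)) (treeDeg T i - 1)) (Finset.mem_univ a)]
  have hd := one_le_treeDeg hm T hT a
  have h1 : treeDeg (attachLeaf T a) a.castSucc - 1 = (treeDeg T a - 1) + 1 := by
    rw [treeDeg_attachLeaf_castSucc]
    simp; omega
  rw [h1, ascFac, Finset.prod_range_succ, ← ascFac]
  have h2 : ((treeDeg T a - 1 : ℕ) : ℝ) = (treeDeg T a : ℝ) - 1 := by
    rw [Nat.cast_sub hd]; simp
  rw [h2]
  rw [Finset.prod_congr rfl (fun i hi => by
    rw [treeDeg_attachLeaf_castSucc, if_neg (Finset.ne_of_mem_erase hi)])]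
  ring

/-- For a tree `T` on `Fin m` (with `n = m + 1 ≥ 3`) and weights with the last one zero,
`∑_a w(T^{(a)}) = ∑_a (y_a + d_T(a) - 1) w(T) = ((∑_a y_a) + n - 3) w(T)`. -/
theorem sum_weights_of_leaf_extensions (m : ℕ) (hm : 3 ≤ m + 1)
    (T : SimpleGraph (Fin m)) (hT : T.IsTree)
    (y : Fin (m + 1) → ℝ) (hy : y (Fin.last m) = 0) :
    (∑ a : Fin m, ∏ i, ascFac (y i) (treeDeg (attachLeaf T a) i - 1)) =
        ∑ a : Fin m, (y (Fin.castSucc a) + (treeDeg T a : ℝ) - 1) *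
          ∏ i : Fin m, ascFac (y (Fin.castSucc i)) (treeDeg T i - 1) ∧
      (∑ a : Fin m, ∏ i, ascFac (y i) (treeDeg (attachLeaf T a) i - 1)) =
        ((∑ a : Fin m, y (Fin.castSucc a)) + ((m : ℝ) + 1) - 3) *
          ∏ i : Fin m, ascFac (y (Fin.castSucc i)) (treeDeg T i - 1) := by
  have hm2 : 2 ≤ m := by omega
  have h1 : (∑ a : Fin m, ∏ i, ascFac (y i) (treeDeg (attachLeaf T a) i - 1)) =
      ∑ a : Fin m, (y (Fin.castSucc a) + (treeDeg T a : ℝ) - 1) *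
        ∏ i : Fin m, ascFac (y (Fin.castSucc i)) (treeDeg T i - 1) :=
    Finset.sum_congr rfl fun a _ => prod_attach_eq hm2 T hT y a
  refine ⟨h1, h1.trans ?_⟩
  rw [← Finset.sum_mul]
  congr 1
  have hdegsum : ∑ a : Fin m, treeDeg T a = 2 * (m - 1) := by
    simp only [treeDeg_eq_degree]
    rw [SimpleGraph.sum_degrees_eq_twice_card_edges]
    have := hT.card_edgeFinset
    simp only [Fintype.card_fin] at this
    omega
  have : ∑ a : Fin m, (treeDeg T a : ℝ) = 2 * ((m : ℝ) - 1) := by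
    rw [← Nat.cast_sum, hdegsum]
    push_cast [Nat.cast_sub (by omega : 1 ≤ m)]
    ring
  rw [Finset.sum_sub_distrib, Finset.sum_add_distrib, this]
  simp [Finset.card_univ]
  ring
end
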